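/- arXiv:2106.13224 — 2 statements merged into one kernel-verified Lean document; each statement's English description precedes it below -/
import Mathlib

section
/- Let 𝓐 ⊆ 𝓑 be two arrangements in the same complex vector space V with equal centres T(𝓐) = T(𝓑). If 𝓐 is irreducible then 𝓑 is also irreducible. In particular, if 𝓐 and 𝓑 are both essential, then irreducibility of 𝓐 implies irreducibility of 𝓑. -/
/-
Because `𝓐` consists of hyperplanes, `W(𝓐)` is finite-dimensional and hence equals the
annihilator of its centre; equal centres therefore give `W(𝓑) ⊆ W(𝓐)`. Given a u-plus
decomposition `𝓑 = 𝓑₁ ⊎ 𝓑₂`, if `𝓐` missed `𝓑₁` we would get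
`W(𝓑₁) ⊆ W(𝓐) ⊆ W(𝓑₂)`, so `W(𝓑₁) = 0`, impossible for a non-empty set of hyperplanes.
Hence `𝓐` meets both parts, and intersecting with them is a u-plus decomposition of `𝓐`.
-/

open scoped Classical

noncomputable section

variable {V : Type*} [AddCommGroup V] [Module ℂ V]

/-- A linear hyperplane in `V`: the kernel of a non-zero linear functional. -/
def IsHyperplane (H : Submodule ℂ V) : Prop :=
  ∃ f : Module.Dual ℂ V, f ≠ 0 ∧ H = LinearMap.ker f

/-- An arrangement: every member of the finite set `𝓗` is a linear hyperplane. -/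
def IsArrangement (𝓗 : Finset (Submodule ℂ V)) : Prop :=
  ∀ H ∈ 𝓗, IsHyperplane H

/-- The span `W(𝓗) ⊆ V⋆` of the defining functionals of the members of `𝓗`,
i.e. the supremum of the dual annihilators of the hyperplanes. -/
def arrSpan (𝓗 : Finset (Submodule ℂ V)) : Submodule ℂ (Module.Dual ℂ V) :=
  ⨆ H ∈ 𝓗, Submodule.dualAnnihilator H

/-- The centre `T(𝓗)`: the common intersection of the members of `𝓗`. -/
def arrCentre (𝓗 : Finset (Submodule ℂ V)) : Submodule ℂ V :=
  ⨅ H ∈ 𝓗, H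

/-- `𝓗` is essential if its centre is zero. -/
def ArrEssential (𝓗 : Finset (Submodule ℂ V)) : Prop :=
  arrCentre 𝓗 = ⊥

/-- `𝓗` is reducible if it admits a u-plus decomposition into two non-empty parts:
a partition `𝓗 = 𝓗₁ ⊎ 𝓗₂` with `W(𝓗) = W(𝓗₁) ⊕ W(𝓗₂)`. -/
def ArrReducible (𝓗 : Finset (Submodule ℂ V)) : Prop :=
  ∃ 𝓗₁ 𝓗₂ : Finset (Submodule ℂ V), 𝓗₁.Nonempty ∧ 𝓗₂.Nonempty ∧
    Disjoint 𝓗₁ 𝓗₂ ∧ 𝓗₁ ∪ 𝓗₂ = 𝓗 ∧ Disjoint (arrSpan 𝓗₁) (arrSpan 𝓗₂)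

/-- `𝓗` is irreducible if it is not reducible. -/
def ArrIrreducible (𝓗 : Finset (Submodule ℂ V)) : Prop :=
  ¬ ArrReducible 𝓗

lemma IsHyperplane.dualAnnihilator_fg {H : Submodule ℂ V} (hH : IsHyperplane H) :
    H.dualAnnihilator.FG := by
  obtain ⟨f, -, rfl⟩ := hH
  rw [← LinearMap.range_dualMap_eq_dualAnnihilator_ker]
  exact Module.Finite.iff_fg.mp inferInstance

lemma IsHyperplane.dualAnnihilator_ne_bot {H : Submodule ℂ V} (hH : IsHyperplane H) :
    H.dualAnnihilator ≠ ⊥ := by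
  obtain ⟨f, hf, rfl⟩ := hH
  exact fun h ↦ hf <| (Submodule.mem_bot ℂ).mp <| h ▸ (Submodule.mem_dualAnnihilator f).mpr
    fun _ hv ↦ hv

lemma IsArrangement.subset {𝓐 𝓑 : Finset (Submodule ℂ V)} (h𝓑 : IsArrangement 𝓑)
    (hsub : 𝓐 ⊆ 𝓑) : IsArrangement 𝓐 :=
  fun H hH ↦ h𝓑 H (hsub hH)

lemma IsArrangement.arrSpan_fg {𝓗 : Finset (Submodule ℂ V)} (h𝓗 : IsArrangement 𝓗) :
    (arrSpan 𝓗).FG :=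
  Submodule.fg_biSup 𝓗 _ fun H hH ↦ (h𝓗 H hH).dualAnnihilator_fg

lemma IsArrangement.arrSpan_ne_bot {𝓗 : Finset (Submodule ℂ V)} (h𝓗 : IsArrangement 𝓗)
    (hne : 𝓗.Nonempty) : arrSpan 𝓗 ≠ ⊥ := by
  obtain ⟨H, hH⟩ := hne
  exact ne_bot_of_le_ne_bot (h𝓗 H hH).dualAnnihilator_ne_bot <|
    le_iSup₂_of_le (f := fun H (_ : H ∈ 𝓗) ↦ H.dualAnnihilator) H hH le_rfl

lemma arrSpan_mono {𝓐 𝓑 : Finset (Submodule ℂ V)} (h : 𝓐 ⊆ 𝓑) : arrSpan 𝓐 ≤ arrSpan 𝓑 :=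
  biSup_mono fun _ hH ↦ h hH

lemma arrCentre_eq_dualCoannihilator (𝓗 : Finset (Submodule ℂ V)) :
    arrCentre 𝓗 = (arrSpan 𝓗).dualCoannihilator := by
  simp only [arrSpan, arrCentre, Submodule.dualCoannihilator_iSup_eq,
    Subspace.dualAnnihilator_dualCoannihilator_eq]

lemma IsArrangement.dualAnnihilator_arrCentre {𝓗 : Finset (Submodule ℂ V)}
    (h𝓗 : IsArrangement 𝓗) : (arrCentre 𝓗).dualAnnihilator = arrSpan 𝓗 := by
  have : FiniteDimensional ℂ (arrSpan 𝓗) := Module.Finite.iff_fg.mpr h𝓗.arrSpan_fg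
  rw [arrCentre_eq_dualCoannihilator, Subspace.dualCoannihilator_dualAnnihilator_eq]

lemma arrSpan_le_of_arrCentre_le {𝓐 𝓑 : Finset (Submodule ℂ V)} (h𝓐 : IsArrangement 𝓐)
    (h : arrCentre 𝓐 ≤ arrCentre 𝓑) : arrSpan 𝓑 ≤ arrSpan 𝓐 :=
  calc arrSpan 𝓑 ≤ (arrSpan 𝓑).dualCoannihilator.dualAnnihilator :=
        Submodule.le_dualCoannihilator_dualAnnihilator _
    _ = (arrCentre 𝓑).dualAnnihilator := by rw [arrCentre_eq_dualCoannihilator]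
    _ ≤ (arrCentre 𝓐).dualAnnihilator := Submodule.dualAnnihilator_anti h
    _ = arrSpan 𝓐 := h𝓐.dualAnnihilator_arrCentre

lemma inter_nonempty_of_disjoint_arrSpan {𝓐 𝓑₁ 𝓑₂ : Finset (Submodule ℂ V)}
    (h𝓑₁ : IsArrangement 𝓑₁) (hne : 𝓑₁.Nonempty) (hsub : 𝓐 ⊆ 𝓑₁ ∪ 𝓑₂)
    (hspan : arrSpan 𝓑₁ ≤ arrSpan 𝓐) (hd : Disjoint (arrSpan 𝓑₁) (arrSpan 𝓑₂)) :
    (𝓐 ∩ 𝓑₁).Nonempty := by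
  by_contra hempty
  have h𝓐 : 𝓐 ⊆ 𝓑₂ := (Finset.disjoint_iff_inter_eq_empty.mpr
    (Finset.not_nonempty_iff_eq_empty.mp hempty)).left_le_of_le_sup_left hsub
  exact h𝓑₁.arrSpan_ne_bot hne <| hd.eq_bot_of_le (hspan.trans (arrSpan_mono h𝓐))

lemma ArrReducible.of_inter {𝓐 𝓑₁ 𝓑₂ : Finset (Submodule ℂ V)} (hsub : 𝓐 ⊆ 𝓑₁ ∪ 𝓑₂)
    (hdisj : Disjoint 𝓑₁ 𝓑₂) (hd : Disjoint (arrSpan 𝓑₁) (arrSpan 𝓑₂))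
    (hne₁ : (𝓐 ∩ 𝓑₁).Nonempty) (hne₂ : (𝓐 ∩ 𝓑₂).Nonempty) : ArrReducible 𝓐 :=
  ⟨𝓐 ∩ 𝓑₁, 𝓐 ∩ 𝓑₂, hne₁, hne₂,
    hdisj.mono Finset.inter_subset_right Finset.inter_subset_right,
    by rw [← Finset.inter_union_distrib_left, Finset.inter_eq_left.mpr hsub],
    hd.mono (arrSpan_mono Finset.inter_subset_right) (arrSpan_mono Finset.inter_subset_right)⟩

theorem irreducible_of_subarrangement_of_centre_eq_general
    (𝓐 𝓑 : Finset (Submodule ℂ V)) (harr : IsArrangement 𝓑) (hsub : 𝓐 ⊆ 𝓑)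
    (hcentre : arrCentre 𝓐 = arrCentre 𝓑) (hA : ArrIrreducible 𝓐) :
    ArrIrreducible 𝓑 := by
  rintro ⟨𝓑₁, 𝓑₂, hne₁, hne₂, hdisj, rfl, hd⟩
  have hspan : ∀ 𝓒 ⊆ 𝓑₁ ∪ 𝓑₂, arrSpan 𝓒 ≤ arrSpan 𝓐 := fun 𝓒 h𝓒 ↦
    (arrSpan_mono h𝓒).trans (arrSpan_le_of_arrCentre_le (harr.subset hsub) hcentre.le)
  exact hA <| .of_inter hsub hdisj hd
    (inter_nonempty_of_disjoint_arrSpan (harr.subset Finset.subset_union_left) hne₁ hsub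
      (hspan _ Finset.subset_union_left) hd)
    (inter_nonempty_of_disjoint_arrSpan (harr.subset Finset.subset_union_right) hne₂
      (Finset.union_comm 𝓑₁ 𝓑₂ ▸ hsub) (hspan _ Finset.subset_union_right) hd.symm)

/-- If `𝓐 ⊆ 𝓑` are arrangements with equal centres and `𝓐` is
irreducible, then `𝓑` is irreducible. -/
theorem irreducible_of_subarrangement_of_centre_eq
    [FiniteDimensional ℂ V]
    (𝓐 𝓑 : Finset (Submodule ℂ V)) (harr : IsArrangement 𝓑) (hsub : 𝓐 ⊆ 𝓑)
    (hcentre : arrCentre 𝓐 = arrCentre 𝓑) (hA : ArrIrreducible 𝓐) :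
    ArrIrreducible 𝓑 :=
  irreducible_of_subarrangement_of_centre_eq_general 𝓐 𝓑 harr hsub hcentre hA
end
end

section
/- Let (V, 𝓗) be an arrangement with |𝓗| = dim V + 1 = n + 1. Then 𝓗 is essential and irreducible if and only if there is a linear isomorphism V ≅ ℂⁿ carrying 𝓗 onto the standard arrangement consisting of the n + 1 hyperplanes {z₁ = 0}, …, {z_n = 0}, {z₁ + ⋯ + z_n = 0}. -/
open scoped Classical

noncomputable section

variable {V : Type*} [AddCommGroup V] [Module ℂ V]

/-- The standard arrangement of `n + 1` hyperplanes in general position in `ℂⁿ`: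
the coordinate hyperplanes `{zᵢ = 0}` together with `{z₁ + ⋯ + z_n = 0}`. -/
def stdArrangement (n : ℕ) : Finset (Submodule ℂ (Fin n → ℂ)) :=
  (Finset.univ.image fun i : Fin n =>
      LinearMap.ker (LinearMap.proj i : (Fin n → ℂ) →ₗ[ℂ] ℂ)) ∪
    {LinearMap.ker (∑ i : Fin n, (LinearMap.proj i : (Fin n → ℂ) →ₗ[ℂ] ℂ))}

/-!
Choose functionals `f₀, …, f_n` cutting out the hyperplanes. Essentiality says that they span
the `n`-dimensional dual `V*`, so they satisfy a non-trivial relation `∑ cᵢ fᵢ = 0`. If some `cᵢ`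
vanished, a dimension count would show that the support of `c` and its complement give a u-plus
decomposition; so irreducibility forces every `cᵢ ≠ 0`. After rescaling, `∑ fᵢ = 0`, hence
`f₁, …, f_n` is a basis of `V*`, and its dual coordinates carry `fᵢ` to `zᵢ` and `f₀` to
`-(z₁ + ⋯ + z_n)`.

Conversely, essentiality and irreducibility are invariant under linear isomorphisms. The standard
arrangement is irreducible: if the part not containing `{∑ zᵢ = 0}` consists of the coordinate
hyperplanes `{zₐ = 0}`, `a ∈ A`, then `∑_{a ∈ A} zₐ ≠ 0` lies in its span, but also in the span
of the other part, being `∑ zᵢ - ∑_{a ∉ A} zₐ`.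
-/

open Module Submodule LinearMap

lemma mem_arrSpan_of_ker_mem {𝓗 : Finset (Submodule ℂ V)} {f : Dual ℂ V}
    (hf : ker f ∈ 𝓗) : f ∈ arrSpan 𝓗 :=
  le_biSup (fun H : Submodule ℂ V => H.dualAnnihilator) hf
    ((mem_dualAnnihilator f).2 fun _ hx => hx)

lemma arrSpan_eq_dualAnnihilator_arrCentre [FiniteDimensional ℂ V] (𝓗 : Finset (Submodule ℂ V)) :
    arrSpan 𝓗 = (arrCentre 𝓗).dualAnnihilator := by
  rw [arrSpan, arrCentre, iInf_subtype', Subspace.dualAnnihilator_iInf_eq, iSup_subtype']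

lemma arrCentre_image_ker {ι : Type*} (F : ι → Dual ℂ V) (s : Finset ι) :
    arrCentre (s.image fun i => ker (F i)) = (span ℂ (F '' s)).dualCoannihilator := by
  ext x
  rw [← SetLike.mem_coe (p := dualCoannihilator _), coe_dualCoannihilator_span]
  simp [arrCentre]

lemma arrSpan_image_ker [FiniteDimensional ℂ V] {ι : Type*}
    (F : ι → Dual ℂ V) (s : Finset ι) :
    arrSpan (s.image fun i => ker (F i)) = span ℂ (F '' s) := by
  rw [arrSpan_eq_dualAnnihilator_arrCentre, arrCentre_image_ker,
    Subspace.dualCoannihilator_dualAnnihilator_eq]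

lemma ArrEssential.arrSpan_eq_top [FiniteDimensional ℂ V] {𝓗 : Finset (Submodule ℂ V)}
    (h : ArrEssential 𝓗) : arrSpan 𝓗 = ⊤ := by
  rw [arrSpan_eq_dualAnnihilator_arrCentre, h, dualAnnihilator_bot]

section Transport

variable {W : Type*} [AddCommGroup W] [Module ℂ W] (e : V ≃ₗ[ℂ] W)

lemma arrCentre_image_map (𝓗 : Finset (Submodule ℂ V)) :
    arrCentre (𝓗.image fun H => map e.toLinearMap H) = map e.toLinearMap (arrCentre 𝓗) := by
  rw [arrCentre, arrCentre, Finset.iInf_finset_image]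
  exact ((orderIsoMapComap e).map_iInf₂ _).symm

lemma arrEssential_image_map_iff {𝓗 : Finset (Submodule ℂ V)} :
    ArrEssential (𝓗.image fun H => map e.toLinearMap H) ↔ ArrEssential 𝓗 := by
  rw [ArrEssential, ArrEssential, arrCentre_image_map]
  exact Submodule.map_eq_bot_iff

lemma dualAnnihilator_map_equiv (H : Submodule ℂ V) :
    (map e.toLinearMap H).dualAnnihilator = map e.symm.dualMap.toLinearMap H.dualAnnihilator := by
  rw [map_equiv_eq_comap_symm]
  ext f
  simp only [mem_dualAnnihilator, mem_comap, mem_map_equiv]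
  exact ⟨fun h v hv => by simpa using h (e v) (by simpa), fun h w hw => by simpa using h _ hw⟩

lemma arrSpan_image_map (𝓗 : Finset (Submodule ℂ V)) :
    arrSpan (𝓗.image fun H => map e.toLinearMap H)
      = map e.symm.dualMap.toLinearMap (arrSpan 𝓗) := by
  simp only [arrSpan, Finset.iSup_finset_image, dualAnnihilator_map_equiv]
  exact ((orderIsoMapComap e.symm.dualMap).map_iSup₂ _).symm

lemma ArrReducible.image_map {𝓗 : Finset (Submodule ℂ V)} (h : ArrReducible 𝓗) :
    ArrReducible (𝓗.image fun H => map e.toLinearMap H) := by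
  obtain ⟨𝓗₁, 𝓗₂, h₁, h₂, hdisj, hunion, hspan⟩ := h
  have hinj : Function.Injective fun H : Submodule ℂ V => map e.toLinearMap H :=
    (orderIsoMapComap e).injective
  refine ⟨_, _, h₁.image _, h₂.image _, (Finset.disjoint_image hinj).2 hdisj,
    by rw [← Finset.image_union, hunion], ?_⟩
  rw [arrSpan_image_map, arrSpan_image_map]
  exact (disjoint_map_orderIso_iff (orderIsoMapComap e.symm.dualMap)).2 hspan

end Transport

lemma disjoint_span_support_span_compl {K M ι : Type*} [Field K] [AddCommGroup M] [Module K M]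
    [FiniteDimensional K M] [Fintype ι] {v : ι → M} (hv : span K (Set.range v) = ⊤)
    (hcard : Fintype.card ι = finrank K M + 1) {c : ι → K} (hc : ∑ i, c i • v i = 0)
    (hc0 : c ≠ 0) :
    Disjoint (span K (v '' Function.support c)) (span K (v '' (Function.support c)ᶜ)) := by
  set S : Finset ι := Finset.univ.filter fun i => c i ≠ 0
  have hS : (S : Set ι) = Function.support c := by ext; simp [S]
  rw [← hS, ← Finset.coe_compl]
  have hdep : ¬ LinearIndependent K fun i : (S : Set ι) => v i := by
    obtain ⟨i, hi⟩ := Function.ne_iff.1 hc0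
    refine Fintype.not_linearIndependent_iff.2 ⟨fun i => c i, ?_, ⟨i, by simpa [S] using hi⟩, hi⟩
    rw [Finset.sum_finset_coe (fun i => c i • v i) S,
      Finset.sum_filter_of_ne fun _ _ => left_ne_zero_of_smul, hc]
  have hA : finrank K (span K (v '' S)) < S.card := by
    have := linearIndependent_iff_card_le_finrank_span.not.1 hdep
    rw [Set.finrank, ← Set.image_eq_range, not_le] at this
    simpa using this
  have hB : finrank K (span K (v '' ↑Sᶜ)) ≤ Sᶜ.card := by
    rw [← Finset.coe_image]
    exact (finrank_span_finset_le_card _).trans Finset.card_image_le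
  have hsup : span K (v '' S) ⊔ span K (v '' ↑Sᶜ) = ⊤ := by
    rw [← span_union, ← Set.image_union, Finset.coe_compl, Set.union_compl_self, Set.image_univ, hv]
  have hdim := Submodule.finrank_sup_add_finrank_inf_eq (span K (v '' S)) (span K (v '' ↑Sᶜ))
  rw [hsup, finrank_top] at hdim
  have hcards := Finset.card_add_card_compl S
  rw [disjoint_iff, ← Submodule.finrank_eq_zero]
  omega

lemma IsArrangement.exists_eq_image_ker {𝓗 : Finset (Submodule ℂ V)} (h : IsArrangement 𝓗)
    {m : ℕ} (hcard : 𝓗.card = m) :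
    ∃ F : Fin m → Dual ℂ V, Function.Injective (fun i => ker (F i)) ∧
      𝓗 = Finset.univ.image fun i => ker (F i) := by
  choose f _ hf using fun H : 𝓗 => h H H.2
  let σ : Fin m ≃ 𝓗 := (Finset.equivFinOfCardEq hcard).symm
  have hker : ∀ i, ker (f (σ i)) = σ i := fun i => (hf (σ i)).symm
  refine ⟨fun i => f (σ i), ?_, ?_⟩
  · intro i j hij
    simp only [hker] at hij
    exact σ.injective (Subtype.ext hij)
  · ext H
    simp only [hker, Finset.mem_image, Finset.mem_univ, true_and]
    exact ⟨fun hH => ⟨σ.symm ⟨H, hH⟩, by simp⟩, by rintro ⟨i, rfl⟩; exact (σ i).2⟩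

lemma ArrEssential.span_range_eq_top [FiniteDimensional ℂ V] {ι : Type*} [Fintype ι]
    {F : ι → Dual ℂ V} (h : ArrEssential (Finset.univ.image fun i => ker (F i))) :
    span ℂ (Set.range F) = ⊤ := by
  rw [← Set.image_univ, ← Finset.coe_univ, ← arrSpan_image_ker]
  exact h.arrSpan_eq_top

lemma ArrIrreducible.ne_zero_of_sum_smul_eq_zero [FiniteDimensional ℂ V] {ι : Type*} [Fintype ι]
    {F : ι → Dual ℂ V} (hinj : Function.Injective fun i => ker (F i))
    (hirr : ArrIrreducible (Finset.univ.image fun i => ker (F i)))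
    (hspan : span ℂ (Set.range F) = ⊤) (hcard : Fintype.card ι = finrank ℂ V + 1)
    {c : ι → ℂ} (hc : ∑ i, c i • F i = 0) (hc0 : c ≠ 0) (i : ι) : c i ≠ 0 := by
  intro hci
  obtain ⟨j, hcj⟩ := Function.ne_iff.1 hc0
  refine hirr ⟨(Finset.univ.filter fun i => c i ≠ 0).image fun i => ker (F i),
    (Finset.univ.filter fun i => c i ≠ 0)ᶜ.image fun i => ker (F i),
    ⟨_, Finset.mem_image_of_mem _ (by simpa using hcj)⟩,
    ⟨_, Finset.mem_image_of_mem _ (by simpa using hci)⟩,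
    (Finset.disjoint_image hinj).2 disjoint_compl_right,
    by rw [← Finset.image_union, Finset.union_compl], ?_⟩
  rw [arrSpan_image_ker, arrSpan_image_ker]
  convert disjoint_span_support_span_compl hspan
    (by rw [Subspace.dual_finrank_eq, hcard]) hc hc0 using 3 <;> ext <;> simp

/-- Defining functionals of the standard arrangement, normalised to sum to zero. -/
def stdFunctional (n : ℕ) : Fin (n + 1) → Dual ℂ (Fin n → ℂ) :=
  Fin.cons (-∑ i, proj i) proj

lemma stdArrangement_eq_image_ker (n : ℕ) :
    stdArrangement n = Finset.univ.image fun i => ker (stdFunctional n i) := by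
  ext K
  simp only [stdArrangement, stdFunctional, Finset.mem_union, Finset.mem_image, Finset.mem_univ,
    true_and, Finset.mem_singleton, Fin.exists_fin_succ, Fin.cons_zero, Fin.cons_succ, ker_neg]
  tauto

lemma exists_equiv_comp_stdFunctional [FiniteDimensional ℂ V] {n : ℕ} (hn : finrank ℂ V = n)
    {G : Fin (n + 1) → Dual ℂ V} (hspan : span ℂ (Set.range G) = ⊤) (hsum : ∑ i, G i = 0) :
    ∃ e : V ≃ₗ[ℂ] (Fin n → ℂ), ∀ i, G i = stdFunctional n i ∘ₗ e.toLinearMap := by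
  have hG0 : G 0 = -∑ j : Fin n, G j.succ := by
    rw [Fin.sum_univ_succ] at hsum
    exact eq_neg_of_add_eq_zero_left hsum
  have hspan' : ⊤ ≤ span ℂ (Set.range fun j : Fin n => G j.succ) := by
    rw [← hspan, span_le]
    rintro _ ⟨i, rfl⟩
    cases i using Fin.cases with
    | zero => exact hG0 ▸ neg_mem (sum_mem fun j _ => subset_span ⟨j, rfl⟩)
    | succ j => exact subset_span ⟨j, rfl⟩
  let β := basisOfTopLeSpanOfCardEqFinrank _ hspan' (by simp [Subspace.dual_finrank_eq, hn])
  let e := (evalEquiv ℂ V).trans β.dualBasis.equivFun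
  have hsucc : ∀ j, G j.succ = proj j ∘ₗ e.toLinearMap := fun j => by ext x; simp [e, β]
  refine ⟨e, fun i => ?_⟩
  cases i using Fin.cases with
  | zero => ext x; simp [stdFunctional, hG0, hsucc]
  | succ j => exact hsucc j

lemma stdArrangement_essential (n : ℕ) : ArrEssential (stdArrangement n) := by
  rw [ArrEssential, eq_bot_iff]
  intro x hx
  simp only [arrCentre, mem_iInf] at hx
  ext i
  exact hx _ (Finset.mem_union_left _ (Finset.mem_image_of_mem _ (Finset.mem_univ i)))

lemma stdArrangement_irreducible (n : ℕ) : ArrIrreducible (stdArrangement n) := by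
  rintro ⟨P₁, P₂, hP₁, hP₂, hdisj, hunion, hspan⟩
  set σ := ker (∑ i : Fin n, (proj i : (Fin n → ℂ) →ₗ[ℂ] ℂ))
  have hmem : ∀ K ∈ stdArrangement n, K ∈ P₁ ∨ K ∈ P₂ := fun K hK =>
    Finset.mem_union.1 (hunion ▸ hK)
  have hσ_mem : σ ∈ stdArrangement n := Finset.mem_union_right _ (Finset.mem_singleton_self _)
  have hcoord_mem (a : Fin n) : ker (proj a : (Fin n → ℂ) →ₗ[ℂ] ℂ) ∈ stdArrangement n :=
    Finset.mem_union_left _ (Finset.mem_image_of_mem _ (Finset.mem_univ a))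
  wlog hσ : σ ∈ P₂ generalizing P₁ P₂
  · exact this P₂ P₁ hP₂ hP₁ hdisj.symm (by rw [Finset.union_comm, hunion]) hspan.symm
      (fun K hK => (hmem K hK).symm) ((hmem σ hσ_mem).resolve_right hσ)
  obtain ⟨a₀, ha₀⟩ : ∃ a, ker (proj a : (Fin n → ℂ) →ₗ[ℂ] ℂ) ∈ P₁ := by
    obtain ⟨K, hK⟩ := hP₁
    have hKstd : K ∈ stdArrangement n := hunion ▸ Finset.mem_union_left _ hK
    simp only [stdArrangement, Finset.mem_union, Finset.mem_image, Finset.mem_univ, true_and,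
      Finset.mem_singleton] at hKstd
    obtain ⟨a, rfl⟩ | rfl := hKstd
    · exact ⟨a, hK⟩
    · exact absurd hσ (Finset.disjoint_left.1 hdisj hK)
  set A := Finset.univ.filter fun a => ker (proj a : (Fin n → ℂ) →ₗ[ℂ] ℂ) ∈ P₁
  set φ : Dual ℂ (Fin n → ℂ) := ∑ a ∈ A, proj a
  have h₁ : φ ∈ arrSpan P₁ :=
    sum_mem fun a ha => mem_arrSpan_of_ker_mem (Finset.mem_filter.1 ha).2
  have h₂ : φ ∈ arrSpan P₂ := by
    rw [show φ = ∑ a, proj a - ∑ a ∈ Aᶜ, proj a by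
      rw [← Finset.sum_add_sum_compl A, add_sub_cancel_right]]
    refine sub_mem (mem_arrSpan_of_ker_mem hσ) (sum_mem fun a ha => mem_arrSpan_of_ker_mem ?_)
    exact (hmem _ (hcoord_mem a)).resolve_left (by simpa [A] using ha)
  have hφ : φ (Pi.single a₀ 1) = 1 := by simp [φ, A, ha₀]
  rw [disjoint_def.1 hspan φ h₁ h₂] at hφ
  exact zero_ne_one hφ

/-- An arrangement of `dim V + 1` hyperplanes is essential and
irreducible iff it is linearly isomorphic to the standard arrangement
`{z₁ = 0}, …, {z_n = 0}, {z₁ + ⋯ + z_n = 0}` in `ℂⁿ`. -/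
theorem essential_irreducible_iff_std
    [FiniteDimensional ℂ V]
    (𝓗 : Finset (Submodule ℂ V)) (harr : IsArrangement 𝓗)
    (hcard : 𝓗.card = Module.finrank ℂ V + 1) :
    (ArrEssential 𝓗 ∧ ArrIrreducible 𝓗) ↔
      ∃ e : V ≃ₗ[ℂ] (Fin (Module.finrank ℂ V) → ℂ),
        𝓗.image (fun H => Submodule.map e.toLinearMap H)
          = stdArrangement (Module.finrank ℂ V) := by
  constructor
  · rintro ⟨hess, hirr⟩
    obtain ⟨F, hinj, rfl⟩ := harr.exists_eq_image_ker hcard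
    have hspan := hess.span_range_eq_top
    obtain ⟨c, hc, hc0⟩ : ∃ c : Fin (finrank ℂ V + 1) → ℂ, ∑ i, c i • F i = 0 ∧ c ≠ 0 := by
      refine (Fintype.not_linearIndependent_iff.1 fun hli => ?_).imp fun c hc =>
        ⟨hc.1, Function.ne_iff.2 hc.2⟩
      simpa [Subspace.dual_finrank_eq] using hli.fintype_card_le_finrank
    have hker : ∀ i, ker (c i • F i) = ker (F i) := fun i =>
      ker_smul _ _ (hirr.ne_zero_of_sum_smul_eq_zero hinj hspan (by simp) hc hc0 i)
    simp_rw [← hker] at hess ⊢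
    obtain ⟨e, he⟩ := exists_equiv_comp_stdFunctional rfl hess.span_range_eq_top hc
    refine ⟨e, ?_⟩
    rw [stdArrangement_eq_image_ker, Finset.image_image]
    congr 1
    funext i
    simp [he i, ker_comp, map_comap_eq_of_surjective e.surjective]
  · rintro ⟨e, he⟩
    exact ⟨(arrEssential_image_map_iff e).1 (he ▸ stdArrangement_essential _),
      fun hred => stdArrangement_irreducible _ (he ▸ hred.image_map e)⟩
end
end
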